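/- Let ℓ be a positive integer and q a point in the Euclidean plane. For a shift j ∈ {0, 1, …, ℓ-1} and an integer k, let B_{j,k} = {p ∈ ℝ² : 2(ℓk + j) ≤ p₁ < 2(ℓ(k+1) + j)} be the k-th block of shift j (a union of ℓ consecutive vertical strips of width 2). Say the closed unit disk around q is cut at shift j if there exist points p, p' with dist(p, q) ≤ 1 and dist(p', q) ≤ 1 lying in two different blocks B_{j,k} ≠ B_{j,k'} of shift j. Then the disk around q is cut at shift j for at most one value of j ∈ {0, 1, …, ℓ-1}. -/

import Mathlib

/-!
A disk of radius 1 meets two blocks of shift `j` only if it contains a block boundary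
`2(ℓm + j)` in the half-open window `(q₁ - 1, q₁ + 1]`. That window has length 2, so it contains
exactly one even integer, `2(⌊(q₁ - 1)/2⌋ + 1)`. Hence every shift at which the disk is cut is
the residue of this one integer modulo `ℓ`.
-/

abbrev Plane : Type := EuclideanSpace ℝ (Fin 2)

def InBlock (ℓ j : ℕ) (k : ℤ) (p : Plane) : Prop :=
  2 * ((ℓ : ℝ) * (k : ℝ) + (j : ℝ)) ≤ p 0 ∧ p 0 < 2 * ((ℓ : ℝ) * ((k : ℝ) + 1) + (j : ℝ))

def CutAt (ℓ j : ℕ) (q : Plane) : Prop :=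
  ∃ p p' : Plane, ∃ k k' : ℤ, k ≠ k' ∧ dist p q ≤ 1 ∧ dist p' q ≤ 1 ∧
    InBlock ℓ j k p ∧ InBlock ℓ j k' p'

lemma Nat.eq_of_intCast_mul_add_eq {ℓ j j' : ℕ} {m m' : ℤ} (hj : j < ℓ) (hj' : j' < ℓ)
    (h : (ℓ : ℤ) * m + j = ℓ * m' + j') : j = j' := by
  have := congrArg (· % (ℓ : ℤ)) h
  simp only [Int.mul_add_emod_self_left] at this
  rw [Int.emod_eq_of_lt (by positivity) (by omega), Int.emod_eq_of_lt (by positivity) (by omega)]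
    at this
  exact_mod_cast this

lemma abs_fst_sub_le_of_dist_le_one {p q : Plane} (h : dist p q ≤ 1) : |p 0 - q 0| ≤ 1 :=
  (PiLp.dist_apply_le p q 0).trans h

lemma CutAt.exists_boundary {ℓ j : ℕ} {q : Plane} (h : CutAt ℓ j q) :
    ∃ m : ℤ, ℓ * m + j = ⌊(q 0 - 1) / 2⌋ + 1 := by
  obtain ⟨p, p', k, k', hne, hp, hp', hb, hb'⟩ := h
  wlog hlt : k < k' generalizing p p' k k'
  · exact this p' p k' k hne.symm hp' hp hb' hb (by omega)
  have hkk' : (ℓ : ℝ) * (k + 1) ≤ ℓ * k' := by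
    gcongr
    exact_mod_cast Int.add_one_le_of_lt hlt
  have hpq := abs_le.1 (abs_fst_sub_le_of_dist_le_one hp)
  have hp'q := abs_le.1 (abs_fst_sub_le_of_dist_le_one hp')
  refine ⟨k + 1, ?_⟩
  rw [eq_comm, ← eq_sub_iff_add_eq, Int.floor_eq_iff]
  push_cast
  constructor <;> linarith [hb.2, hb'.1]

theorem disk_cut_at_most_one_shift_general (ℓ : ℕ) (q : Plane) :
    ∀ j j' : ℕ, j < ℓ → j' < ℓ → CutAt ℓ j q → CutAt ℓ j' q → j = j' := by
  intro j j' hj hj' hc hc'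
  obtain ⟨m, hm⟩ := hc.exists_boundary
  obtain ⟨m', hm'⟩ := hc'.exists_boundary
  exact Nat.eq_of_intCast_mul_add_eq hj hj' (hm.trans hm'.symm)

/-- For each point `q`, the closed unit disk around `q` is cut at shift `j` for at most one
value of `j ∈ {0, …, ℓ-1}`. -/
theorem disk_cut_at_most_one_shift (ℓ : ℕ) (hℓ : 0 < ℓ) (q : Plane) :
    ∀ j j' : ℕ, j < ℓ → j' < ℓ → CutAt ℓ j q → CutAt ℓ j' q → j = j' :=
  disk_cut_at_most_one_shift_general ℓ q
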